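/- Consider the problem (D̄^P_K): sup (1/(1+⟨e,e⟩))(b − Ae)^⊤f over (κ,f) ∈ ℝ × ℝ^m subject to 1 + κ − (1/(1+⟨e,e⟩))(b − Ae)^⊤f ≥ 0, −κ ≥ 0, −κ + b^⊤f ≥ 0, −κe − A*f ∈ K. Its optimal value is at most 1; and if an optimal solution (κ*, f*) achieves value exactly 1, then κ* = 0 and (f*, −A*f*) is either an improving ray of (D) (b^⊤f* > 0, −A*f* ∈ K) or a reducing direction for (P) (b^⊤f* = 0, −A*f* ∈ K \ {0}). -/
import Mathlib


open scoped RealInnerProductSpace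

/-- Feasibility for the problem `(D̄^P_K)` with variables `(κ, f)`. -/
def DbarFeas {E : Type*} [NormedAddCommGroup E] [InnerProductSpace ℝ E]
    [FiniteDimensional ℝ E] {m : ℕ} (K : Set E) (e : E)
    (A : E →ₗ[ℝ] EuclideanSpace ℝ (Fin m)) (b : EuclideanSpace ℝ (Fin m))
    (κ : ℝ) (f : EuclideanSpace ℝ (Fin m)) : Prop :=
  0 ≤ 1 + κ - (1 + ⟪e, e⟫)⁻¹ * ⟪b - A e, f⟫ ∧
  0 ≤ -κ ∧
  0 ≤ -κ + ⟪b, f⟫ ∧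
  -κ • e - (LinearMap.adjoint A) f ∈ K

/-- The objective of `(D̄^P_K)`: `(1/(1+⟨e,e⟩))(b − Ae)^⊤f`. -/
noncomputable def DbarVal {E : Type*} [NormedAddCommGroup E] [InnerProductSpace ℝ E]
    {m : ℕ} (e : E) (A : E →ₗ[ℝ] EuclideanSpace ℝ (Fin m))
    (b : EuclideanSpace ℝ (Fin m)) (f : EuclideanSpace ℝ (Fin m)) : ℝ :=
  (1 + ⟪e, e⟫)⁻¹ * ⟪b - A e, f⟫

/-- The optimal value of `(D̄^P_K)` is at most `1`; and if an optimal
solution `(κ*, f*)` achieves value exactly `1`, then `κ* = 0` and `(f*, −A*f*)` is either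
an improving ray of (D) (`b^⊤f* > 0`, `−A*f* ∈ K`) or a reducing direction for (P)
(`b^⊤f* = 0`, `−A*f* ∈ K \ {0}`). -/
theorem stmt17 {E : Type*} [NormedAddCommGroup E] [InnerProductSpace ℝ E]
    [FiniteDimensional ℝ E] {m : ℕ} (K : Set E) (e : E)
    (hKclosed : IsClosed K) (hKconv : Convex ℝ K)
    (hKcone : ∀ z ∈ K, ∀ t : ℝ, 0 ≤ t → t • z ∈ K)
    (hKselfdual : {s : E | ∀ z ∈ K, 0 ≤ ⟪s, z⟫} = K)
    (he : e ∈ interior K)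
    (A : E →ₗ[ℝ] EuclideanSpace ℝ (Fin m)) (b : EuclideanSpace ℝ (Fin m)) :
    sSup {v : EReal | ∃ (κ : ℝ) (f : EuclideanSpace ℝ (Fin m)),
        DbarFeas K e A b κ f ∧ v = (DbarVal e A b f : EReal)} ≤ (1 : EReal) ∧
    (∀ (κ : ℝ) (f : EuclideanSpace ℝ (Fin m)), DbarFeas K e A b κ f →
      (∀ (κ' : ℝ) (f' : EuclideanSpace ℝ (Fin m)), DbarFeas K e A b κ' f' →
        DbarVal e A b f' ≤ DbarVal e A b f) →
      DbarVal e A b f = 1 →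
      κ = 0 ∧
        ((0 < ⟪b, f⟫ ∧ -((LinearMap.adjoint A) f) ∈ K) ∨
          (⟪b, f⟫ = 0 ∧ -((LinearMap.adjoint A) f) ∈ K ∧
            -((LinearMap.adjoint A) f) ≠ 0))) := by
  have key : ∀ (κ : ℝ) (f : EuclideanSpace ℝ (Fin m)), DbarFeas K e A b κ f →
      DbarVal e A b f ≤ 1 := by
    intro κ f hfeas
    obtain ⟨h1, h2, _, _⟩ := hfeas
    have : DbarVal e A b f ≤ 1 + κ := by
      unfold DbarVal; linarith
    linarith
  constructor
  · apply sSup_le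
    rintro v ⟨κ, f, hfeas, rfl⟩
    exact_mod_cast key κ f hfeas
  · intro κ f hfeas _ hval
    obtain ⟨h1, h2, h3, h4⟩ := hfeas
    have hκ : κ = 0 := by
      have : (1 + ⟪e, e⟫)⁻¹ * ⟪b - A e, f⟫ = 1 := hval
      have hge : 0 ≤ κ := by linarith
      linarith
    subst hκ
    have hK : -((LinearMap.adjoint A) f) ∈ K := by
      simpa using h4
    have hbf : 0 ≤ ⟪b, f⟫ := by linarith
    refine ⟨rfl, ?_⟩
    rcases hbf.lt_or_eq with h | h
    · exact Or.inl ⟨h, hK⟩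
    · refine Or.inr ⟨h.symm, hK, ?_⟩
      intro hzero
      have hAf : (LinearMap.adjoint A) f = 0 := by
        simpa using congrArg Neg.neg hzero
      have hAe : ⟪A e, f⟫ = 0 := by
        rw [← LinearMap.adjoint_inner_right, hAf, inner_zero_right]
      have hval' : (1 + ⟪e, e⟫)⁻¹ * ⟪b - A e, f⟫ = 1 := hval
      rw [inner_sub_left, hAe, ← h] at hval'
      simp at hval'
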